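/- Let Γ be a group and let m(Γ) = ⟨Γ; s, d ∣ d⁻¹gd = g·s⁻¹gs and [g, s⁻¹hs] = 1 for all g, h ∈ Γ⟩ be its standard mitosis. Then the canonical homomorphism Γ → m(Γ), sending each g ∈ Γ to the corresponding generator of m(Γ), is injective; that is, Γ embeds into its standard mitosis. -/

import Mathlib

/-!
`Γ × Γ` acts on itself by left multiplication; write `L x` for the permutation given by `x`.
Sending `g ↦ L (g, 1)`, `s` to the swap and `d` to the shear `(a, b) ↦ (a, a⁻¹b)` respects the
relations of `m(Γ)`: conjugating `L (g, 1)` by the swap gives `L (1, g)`, which commutes with every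
`L (h, 1)`, and conjugating it by the shear gives `L (g, g) = L (g, 1) L (1, g)`. The composite
`Γ → m(Γ) → Perm (Γ × Γ)` is then the faithful `g ↦ L (g, 1)`.
-/

/-- The commutator with the convention `[x, y] := x⁻¹y⁻¹xy`. -/
def pcomm {G : Type*} [Group G] (x y : G) : G := x⁻¹ * y⁻¹ * x * y

/-- The generator of the standard mitosis corresponding to `g ∈ Γ`,
as an element of the free group on `Γ ⊕ Bool` (`inr true ↦ s`, `inr false ↦ d`). -/
def mGen {Γ : Type*} [Group Γ] (g : Γ) : FreeGroup (Γ ⊕ Bool) :=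
  FreeGroup.of (Sum.inl g)

def mS (Γ : Type*) [Group Γ] : FreeGroup (Γ ⊕ Bool) := FreeGroup.of (Sum.inr true)

def mD (Γ : Type*) [Group Γ] : FreeGroup (Γ ⊕ Bool) := FreeGroup.of (Sum.inr false)

def mitosisRels (Γ : Type*) [Group Γ] : Set (FreeGroup (Γ ⊕ Bool)) :=
  ((FreeGroup.map Sum.inl : FreeGroup Γ →* FreeGroup (Γ ⊕ Bool)) ''
      {w : FreeGroup Γ | FreeGroup.lift (id : Γ → Γ) w = 1})
    ∪ {r | ∃ g : Γ, r = (mD Γ)⁻¹ * mGen g * mD Γ * (mGen g * (mS Γ)⁻¹ * mGen g * mS Γ)⁻¹}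
    ∪ {r | ∃ g h : Γ, r = pcomm (mGen g) ((mS Γ)⁻¹ * mGen h * mS Γ)}

abbrev Mitosis (Γ : Type*) [Group Γ] : Type _ := PresentedGroup (mitosisRels Γ)

def mGenM {Γ : Type*} [Group Γ] (g : Γ) : Mitosis Γ := PresentedGroup.of (Sum.inl g)

def mSM (Γ : Type*) [Group Γ] : Mitosis Γ := PresentedGroup.of (Sum.inr true)

def mDM (Γ : Type*) [Group Γ] : Mitosis Γ := PresentedGroup.of (Sum.inr false)

open Equiv

section Inclusion

variable {Γ : Type*} [Group Γ]

theorem mGenM_mul (g h : Γ) : mGenM (g * h) = mGenM g * mGenM h :=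
  PresentedGroup.mk_eq_mk_of_mul_inv_mem (rels := mitosisRels Γ)
    (Or.inl <| Or.inl ⟨FreeGroup.of (g * h) * (FreeGroup.of g * FreeGroup.of h)⁻¹,
      by simp, by simp⟩)

def mitosisIncl : Γ →* Mitosis Γ := MonoidHom.mk' mGenM mGenM_mul

end Inclusion

theorem pcomm_eq_one_iff {G : Type*} [Group G] {x y : G} : pcomm x y = 1 ↔ Commute x y := by
  rw [← Commute.inv_inv_iff, ← commutatorElement_eq_one_iff_commute, commutatorElement_def,
    pcomm, inv_inv, inv_inv]

theorem map_pcomm {G H : Type*} [Group G] [Group H] (f : G →* H) (x y : G) :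
    f (pcomm x y) = pcomm (f x) (f y) := by
  simp only [pcomm, map_mul, map_inv]

section PermModel

variable {Γ : Type*} [Group Γ]

open MonoidHom

local notation "L" => MulAction.toPermHom (Γ × Γ) (Γ × Γ)

def invMulShear (Γ : Type*) [Group Γ] : Perm (Γ × Γ) :=
  prodShear (Equiv.refl Γ) fun a => Equiv.mulLeft a⁻¹

theorem prodComm_conj_inl (g : Γ) :
    (prodComm Γ Γ)⁻¹ * L (inl Γ Γ g) * prodComm Γ Γ = L (inr Γ Γ g) := by
  ext ⟨a, b⟩ <;> simp [Perm.inv_def]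

theorem invMulShear_conj_inl (g : Γ) :
    (invMulShear Γ)⁻¹ * L (inl Γ Γ g) * invMulShear Γ = L (inl Γ Γ g) * L (inr Γ Γ g) := by
  ext ⟨a, b⟩ <;> simp [invMulShear, Perm.inv_def, mul_assoc]

def mitosisPerm : Γ ⊕ Bool → Perm (Γ × Γ) :=
  Sum.elim (fun g => L (inl Γ Γ g)) fun b => cond b (prodComm Γ Γ) (invMulShear Γ)

theorem lift_mitosisPerm_comp_map_inl :
    (FreeGroup.lift mitosisPerm).comp (FreeGroup.map Sum.inl) =
      ((L).comp (inl Γ Γ)).comp (FreeGroup.lift id) :=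
  FreeGroup.ext_hom _ _ fun _ => by simp [mitosisPerm]

theorem lift_mitosisPerm_eq_one : ∀ r ∈ mitosisRels Γ, FreeGroup.lift mitosisPerm r = 1 := by
  have hs : FreeGroup.lift mitosisPerm (mS Γ) = prodComm Γ Γ := FreeGroup.lift_apply_of
  have hd : FreeGroup.lift mitosisPerm (mD Γ) = invMulShear Γ := FreeGroup.lift_apply_of
  have hg (g : Γ) : FreeGroup.lift mitosisPerm (mGen g) = L (inl Γ Γ g) := FreeGroup.lift_apply_of
  rintro r ((⟨w, hw, rfl⟩ | ⟨g, rfl⟩) | ⟨g, h, rfl⟩)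
  · rw [← MonoidHom.comp_apply, lift_mitosisPerm_comp_map_inl, MonoidHom.comp_apply, hw, map_one]
  · simp only [map_mul, map_inv, hs, hd, hg]
    rw [mul_inv_eq_one, invMulShear_conj_inl, ← prodComm_conj_inl]
    group
  · simp only [map_pcomm, map_mul, map_inv, hs, hg, prodComm_conj_inl, pcomm_eq_one_iff]
    exact (commute_inl_inr g h).map L

def mitosisToPerm : Mitosis Γ →* Perm (Γ × Γ) := PresentedGroup.toGroup lift_mitosisPerm_eq_one

theorem mitosisToPerm_comp_mitosisIncl : mitosisToPerm.comp mitosisIncl = (L).comp (inl Γ Γ) :=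
  MonoidHom.ext fun _ => PresentedGroup.toGroup.of lift_mitosisPerm_eq_one

end PermModel

/-- The canonical homomorphism `Γ → m(Γ)`, sending each `g ∈ Γ` to the
corresponding generator of the standard mitosis `m(Γ)`, is a well-defined
injective group homomorphism: `Γ` embeds into its standard mitosis. -/
theorem embeds_into_mitosis (Γ : Type*) [Group Γ] :
    ∃ ι : Γ →* Mitosis Γ,
      (∀ g : Γ, ι g = mGenM g) ∧ Function.Injective ι := by
  refine ⟨mitosisIncl, fun _ => rfl, Function.Injective.of_comp (f := mitosisToPerm) ?_⟩
  rw [← MonoidHom.coe_comp, mitosisToPerm_comp_mitosisIncl, MonoidHom.coe_comp]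
  exact MulAction.toPerm_injective.comp (Prod.mk_left_injective 1)
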